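/- For every integer n ≥ 2, the explicitly given matrices for the Artin generators are invertible over ℤ[q^{±1}, t^{±1}] and satisfy the braid relations L(σ_i)L(σ_{i+1})L(σ_i) = L(σ_{i+1})L(σ_i)L(σ_{i+1}) and L(σ_i)L(σ_j) = L(σ_j)L(σ_i) for |i−j|>1; consequently they define a group homomorphism L: B_n → GL(n(n−1)/2, ℤ[q^{±1}, t^{±1}]) (the Lawrence–Krammer–Bigelow representation). -/

import Mathlib

/-- The braid relations on `n` strands (generator `i : Fin (n-1)` is the Artin
generator `σ_{i+1}` in 1-based labeling). -/
def braidRels (n : ℕ) : Set (FreeGroup (Fin (n - 1))) :=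
  {r | (∃ i j : Fin (n - 1), (i : ℕ) + 1 = (j : ℕ) ∧
        r = FreeGroup.of i * FreeGroup.of j * FreeGroup.of i *
            (FreeGroup.of j * FreeGroup.of i * FreeGroup.of j)⁻¹) ∨
       (∃ i j : Fin (n - 1), (i : ℕ) + 1 < (j : ℕ) ∧
        r = FreeGroup.of i * FreeGroup.of j * (FreeGroup.of j * FreeGroup.of i)⁻¹)}

/-- The braid group `B_n` on `n` strands, as a presented group. -/
abbrev BraidGroup (n : ℕ) := PresentedGroup (braidRels n)

/-- The Artin generator `σ_k` (1-based: valid for `1 ≤ k ≤ n-1`). -/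
def braidGen (n k : ℕ) : BraidGroup n :=
  if h : k - 1 < n - 1 then PresentedGroup.of ⟨k - 1, h⟩ else 1

/-- The band (Birman–Ko–Lee) generator
`a_{i,j} = (σ_i σ_{i+1} ⋯ σ_{j-2}) σ_{j-1} (σ_i σ_{i+1} ⋯ σ_{j-2})⁻¹`
(1-based: valid for `1 ≤ i < j ≤ n`). -/
def band (n i j : ℕ) : BraidGroup n :=
  ((List.range' i (j - 1 - i)).map (braidGen n)).prod * braidGen n (j - 1) *
    (((List.range' i (j - 1 - i)).map (braidGen n)).prod)⁻¹

/-- The submonoid of dual-positive braids `B_n^{+*}`, generated by the band generators. -/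
def dualPos (n : ℕ) : Submonoid (BraidGroup n) :=
  Submonoid.closure {b | ∃ i j : ℕ, 1 ≤ i ∧ i < j ∧ j ≤ n ∧ b = band n i j}

/-- The subword partial order for the dual Garside structure:
`x ≼ y` iff `x⁻¹ * y` is dual-positive. -/
def dualLe (n : ℕ) (x y : BraidGroup n) : Prop := x⁻¹ * y ∈ dualPos n

/-- The dual Garside element `δ = a_{1,2} a_{2,3} ⋯ a_{n-1,n}`. -/
def dualDelta (n : ℕ) : BraidGroup n :=
  ((List.range' 1 (n - 1)).map (fun i => band n i (i + 1))).prod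

/-- The dual Garside supremum: `sup_{Σ*}(β) = min { m : β ≼ δ^m }`. -/
noncomputable def supDual (n : ℕ) (β : BraidGroup n) : ℤ :=
  sInf {m : ℤ | dualLe n β (dualDelta n ^ m)}

/-- The dual Garside infimum: `inf_{Σ*}(β) = max { M : δ^M ≼ β }`. -/
noncomputable def infDual (n : ℕ) (β : BraidGroup n) : ℤ :=
  sSup {m : ℤ | dualLe n (dualDelta n ^ m) β}

/-- A dual-simple element: `1 ≼ s ≼ δ`. -/
def dualSimple (n : ℕ) (s : BraidGroup n) : Prop :=
  dualLe n 1 s ∧ dualLe n s (dualDelta n)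

/-- The dual Garside length: word length with respect to the dual-simple elements
and their inverses. -/
noncomputable def lengthDual (n : ℕ) (β : BraidGroup n) : ℕ :=
  sInf {k : ℕ | ∃ L : List (BraidGroup n), L.length = k ∧
    (∀ x ∈ L, dualSimple n x ∨ dualSimple n x⁻¹) ∧ L.prod = β}

/-- The ring of two-variable Laurent polynomials `ℤ[q^{±1}, t^{±1}]`:
a monomial `q^a t^b` corresponds to the group element `(a, b) : ℤ × ℤ`. -/
abbrev R2 := AddMonoidAlgebra ℤ (ℤ × ℤ)

/-- The variable `q`. -/
noncomputable def Qv : R2 := AddMonoidAlgebra.single (1, 0) 1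

/-- The variable `t`. -/
noncomputable def Tv : R2 := AddMonoidAlgebra.single (0, 1) 1

/-- Kronecker delta for basis indices. -/
noncomputable def eb (p p' : ℕ × ℕ) : R2 := if p = p' then 1 else 0

/-- The `((a,b),(j,k))`-entry of the matrix of `L(σ_i)`, i.e. the coefficient of
`F_{a,b}` in `L(σ_i)(F_{j,k})` (all indices 1-based, `a < b`, `j < k`). -/
noncomputable def lkbEntry (i a b j k : ℕ) : R2 :=
  if i = j ∧ i = k - 1 then (-(Qv ^ 2) * Tv) * eb (a, b) (j, k)
  else if i = j - 1 then
    Qv * eb (a, b) (i, k) + (Qv ^ 2 - Qv) * eb (a, b) (i, j) + (1 - Qv) * eb (a, b) (j, k)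
  else if i = j then eb (a, b) (j + 1, k)
  else if i = k - 1 then
    Qv * eb (a, b) (j, i) + (1 - Qv) * eb (a, b) (j, k) + (Qv - Qv ^ 2) * Tv * eb (a, b) (i, k)
  else if i = k then eb (a, b) (j, k + 1)
  else eb (a, b) (j, k)

/-- The index set `{(j,k) : 1 ≤ j < k ≤ n}` for the basis `F_{j,k}`; it has
cardinality `n(n-1)/2`. -/
abbrev Idx (n : ℕ) := {p : Fin n × Fin n // p.1 < p.2}

/-- The matrix of `L(σ_i)` (1-based, valid for `1 ≤ i ≤ n-1`) in the basis of
standard forks. -/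
noncomputable def lkbGenMatrix (n i : ℕ) : Matrix (Idx n) (Idx n) R2 :=
  fun r c => lkbEntry i ((r.1.1 : ℕ) + 1) ((r.1.2 : ℕ) + 1) ((c.1.1 : ℕ) + 1) ((c.1.2 : ℕ) + 1)

/-- `L` is the Lawrence–Krammer–Bigelow representation: it sends each Artin
generator `σ_i` to the explicit matrix `lkbGenMatrix n i`. -/
def IsLKBRep (n : ℕ) (L : BraidGroup n →* Matrix.GeneralLinearGroup (Idx n) R2) : Prop :=
  ∀ i, 1 ≤ i → i ≤ n - 1 →
    (L (braidGen n i) : Matrix (Idx n) (Idx n) R2) = lkbGenMatrix n i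

/-- The set of exponents of `q` occurring (with nonzero coefficient) in some entry
of the matrix `A`. -/
def qExps {N : Type*} (A : Matrix N N R2) : Set ℤ :=
  {d : ℤ | ∃ r c e, (A r c).coeff (d, e) ≠ 0}

/-- `M_q(A)`: the maximal exponent of `q` occurring in a nonzero entry of `A`. -/
noncomputable def Mq {N : Type*} (A : Matrix N N R2) : ℤ := sSup (qExps A)

/-- `m_q(A)`: the minimal exponent of `q` occurring in a nonzero entry of `A`. -/
noncomputable def mq {N : Type*} (A : Matrix N N R2) : ℤ := sInf (qExps A)

/-!
Both sides of every relation are compared column by column, i.e. on each basis vector `F_{u,v}`.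
The image of `F_{u,v}` under `L(σ_i)^{±1}` is a combination of at most three basis vectors
that depends only on how `u` and `v` sit relative to `i` and `i + 1`. Splitting according to
which of the finitely many indices involved in a relation `u` and `v` coincide with, each
case becomes an identity between linear combinations of basis vectors over `ℤ[q^{±1}, t^{±1}]`.
The relations then factor the generator matrices through the presentation of `B_n`.
-/

open Matrix

noncomputable def Qinv : R2 := AddMonoidAlgebra.single (-1, 0) 1

noncomputable def Tinv : R2 := AddMonoidAlgebra.single (0, -1) 1

lemma Qv_mul_Qinv : Qv * Qinv = 1 := by
  rw [Qv, Qinv, AddMonoidAlgebra.single_mul_single, mul_one]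
  rfl

lemma Tv_mul_Tinv : Tv * Tinv = 1 := by
  rw [Tv, Tinv, AddMonoidAlgebra.single_mul_single, mul_one]
  rfl

namespace Idx

variable {n : ℕ}

/-- The 1-based indices `(j, k)` of the basis vector `F_{j,k}` at `r`. -/
def label (r : Idx n) : ℕ × ℕ := ((r.1.1 : ℕ) + 1, (r.1.2 : ℕ) + 1)

lemma label_injective : Function.Injective (label (n := n)) := by
  intro r c h
  simp only [label, Prod.mk.injEq, add_left_inj, Fin.val_inj] at h
  exact Subtype.ext (Prod.ext h.1 h.2)

lemma exists_label_eq {u v : ℕ} (hu : 1 ≤ u) (huv : u < v) (hv : v ≤ n) :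
    ∃ c : Idx n, c.label = (u, v) :=
  ⟨⟨(⟨u - 1, by omega⟩, ⟨v - 1, by omega⟩), Fin.mk_lt_mk.2 (by omega)⟩, by
    simp only [label, Prod.mk.injEq]; omega⟩

lemma label_bounds (c : Idx n) : 1 ≤ c.label.1 ∧ c.label.1 < c.label.2 ∧ c.label.2 ≤ n :=
  ⟨by simp [label], by simpa [label] using c.2, by simp [label]⟩

end Idx

/-- The coordinate vector of `F_p`; it is `0` when `p` labels no element of `Idx n`. -/
noncomputable def fork (n : ℕ) (p : ℕ × ℕ) : Idx n → R2 := fun r => eb r.label p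

lemma mulVec_fork_label {n : ℕ} (A : Matrix (Idx n) (Idx n) R2) (c : Idx n) :
    A *ᵥ fork n c.label = fun r => A r c := by
  funext r
  rw [mulVec, dotProduct, Finset.sum_eq_single c]
  · simp [fork, eb]
  · intro b _ hb
    simp [fork, eb, Idx.label_injective.ne hb]
  · simp

lemma ext_of_mulVec_fork {n : ℕ} {A B : Matrix (Idx n) (Idx n) R2}
    (h : ∀ u v, 1 ≤ u → u < v → v ≤ n → A *ᵥ fork n (u, v) = B *ᵥ fork n (u, v)) :
    A = B := by
  funext r c
  obtain ⟨hu, huv, hv⟩ := c.label_bounds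
  simpa only [Prod.mk.eta, mulVec_fork_label] using congrFun (h _ _ hu huv hv) r

def ofPairs (n : ℕ) (f : ℕ × ℕ → ℕ × ℕ → R2) : Matrix (Idx n) (Idx n) R2 :=
  fun r c => f r.label c.label

lemma ofPairs_mulVec_fork {n u v : ℕ} (f : ℕ × ℕ → ℕ × ℕ → R2)
    (hu : 1 ≤ u) (huv : u < v) (hv : v ≤ n) :
    ofPairs n f *ᵥ fork n (u, v) = fun r => f r.label (u, v) := by
  obtain ⟨c, hc⟩ := Idx.exists_label_eq hu huv hv
  rw [← hc, mulVec_fork_label]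
  rfl

lemma lkbGenMatrix_mulVec_fork {n i u v : ℕ} (hu : 1 ≤ u) (huv : u < v) (hv : v ≤ n) :
    lkbGenMatrix n i *ᵥ fork n (u, v) =
      if i = u ∧ i = v - 1 then (-(Qv ^ 2) * Tv) • fork n (u, v)
      else if i = u - 1 then
        Qv • fork n (i, v) + (Qv ^ 2 - Qv) • fork n (i, u) + (1 - Qv) • fork n (u, v)
      else if i = u then fork n (u + 1, v)
      else if i = v - 1 then
        Qv • fork n (u, i) + (1 - Qv) • fork n (u, v) + ((Qv - Qv ^ 2) * Tv) • fork n (i, v)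
      else if i = v then fork n (u, v + 1)
      else fork n (u, v) := by
  refine (ofPairs_mulVec_fork (fun p q => lkbEntry i p.1 p.2 q.1 q.2) hu huv hv).trans ?_
  funext r
  dsimp only [lkbEntry]
  split_ifs <;> rfl

lemma lkbGenMatrix_braid (n i : ℕ) (hi : 1 ≤ i) (hin : i + 2 ≤ n) :
    lkbGenMatrix n i * lkbGenMatrix n (i + 1) * lkbGenMatrix n i =
      lkbGenMatrix n (i + 1) * lkbGenMatrix n i * lkbGenMatrix n (i + 1) := by
  refine ext_of_mulVec_fork fun u v hu huv hv => ?_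
  simp only [← mulVec_mulVec]
  obtain rfl | rfl | rfl | hu' : i = u ∨ u = i + 1 ∨ u = i + 2 ∨
      (u ≠ i ∧ u ≠ i + 1 ∧ u ≠ i + 2) := by omega
  all_goals obtain rfl | rfl | rfl | hv' : i = v ∨ v = i + 1 ∨ v = i + 2 ∨
      (v ≠ i ∧ v ≠ i + 1 ∧ v ≠ i + 2) := by omega
  -- `↓` makes `simp` decide each `if` before it can rewrite the condition into an unusable form.
  all_goals first
    | omega
    | simp (disch := omega) only [mulVec_add, mulVec_smul, lkbGenMatrix_mulVec_fork, ↓if_pos,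
        ↓if_neg] <;> module

lemma lkbGenMatrix_comm (n i j : ℕ) (hi : 1 ≤ i) (hij : i + 1 < j) (hj : j + 1 ≤ n) :
    lkbGenMatrix n i * lkbGenMatrix n j = lkbGenMatrix n j * lkbGenMatrix n i := by
  refine ext_of_mulVec_fork fun u v hu huv hv => ?_
  simp only [← mulVec_mulVec]
  obtain rfl | rfl | rfl | rfl | hu' : i = u ∨ u = i + 1 ∨ j = u ∨ u = j + 1 ∨
      (u ≠ i ∧ u ≠ i + 1 ∧ u ≠ j ∧ u ≠ j + 1) := by omega
  all_goals obtain rfl | rfl | rfl | rfl | hv' : i = v ∨ v = i + 1 ∨ j = v ∨ v = j + 1 ∨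
      (v ≠ i ∧ v ≠ i + 1 ∧ v ≠ j ∧ v ≠ j + 1) := by omega
  all_goals first
    | omega
    | simp (disch := omega) only [mulVec_add, mulVec_smul, lkbGenMatrix_mulVec_fork, ↓if_pos,
        ↓if_neg] <;> module

noncomputable def lkbEntryInv (i a b j k : ℕ) : R2 :=
  if i = j ∧ i = k - 1 then (-(Qinv ^ 2) * Tinv) * eb (a, b) (j, k)
  else if i = j - 1 then eb (a, b) (i, k)
  else if i = j then
    Qinv * eb (a, b) (j + 1, k) + (1 - Qinv) * eb (a, b) (j, k) +
      ((Qinv - Qinv ^ 2) * Tinv) * eb (a, b) (i, i + 1)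
  else if i = k - 1 then eb (a, b) (j, i)
  else if i = k then
    Qinv * eb (a, b) (j, k + 1) + (1 - Qinv) * eb (a, b) (j, k) +
      (Qinv ^ 2 - Qinv) * eb (a, b) (i, i + 1)
  else eb (a, b) (j, k)

noncomputable def lkbGenMatrixInv (n i : ℕ) : Matrix (Idx n) (Idx n) R2 :=
  ofPairs n fun p q => lkbEntryInv i p.1 p.2 q.1 q.2

lemma lkbGenMatrixInv_mulVec_fork {n i u v : ℕ} (hu : 1 ≤ u) (huv : u < v) (hv : v ≤ n) :
    lkbGenMatrixInv n i *ᵥ fork n (u, v) =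
      if i = u ∧ i = v - 1 then (-(Qinv ^ 2) * Tinv) • fork n (u, v)
      else if i = u - 1 then fork n (i, v)
      else if i = u then
        Qinv • fork n (u + 1, v) + (1 - Qinv) • fork n (u, v) +
          ((Qinv - Qinv ^ 2) * Tinv) • fork n (i, i + 1)
      else if i = v - 1 then fork n (u, i)
      else if i = v then
        Qinv • fork n (u, v + 1) + (1 - Qinv) • fork n (u, v) +
          (Qinv ^ 2 - Qinv) • fork n (i, i + 1)
      else fork n (u, v) := by
  rw [lkbGenMatrixInv, ofPairs_mulVec_fork _ hu huv hv]
  funext r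
  dsimp only [lkbEntryInv]
  split_ifs <;> rfl

lemma lkbGenMatrix_mul_lkbGenMatrixInv (n i : ℕ) (hi : 1 ≤ i) (hin : i + 1 ≤ n) :
    lkbGenMatrix n i * lkbGenMatrixInv n i = 1 := by
  refine ext_of_mulVec_fork fun u v hu huv hv => ?_
  rw [one_mulVec, ← mulVec_mulVec]
  obtain rfl | rfl | hu' : i = u ∨ u = i + 1 ∨ (u ≠ i ∧ u ≠ i + 1) := by omega
  all_goals obtain rfl | rfl | hv' : i = v ∨ v = i + 1 ∨ (v ≠ i ∧ v ≠ i + 1) := by omega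
  -- The coefficients agree only modulo `q q⁻¹ = 1` and `t t⁻¹ = 1`.
  all_goals first
    | omega
    | simp (disch := omega) only [mulVec_add, mulVec_smul, lkbGenMatrix_mulVec_fork,
        lkbGenMatrixInv_mulVec_fork, ↓if_pos, ↓if_neg] <;> match_scalars <;>
        grind [Qv_mul_Qinv, Tv_mul_Tinv]

lemma isUnit_lkbGenMatrix {n i : ℕ} (hi : 1 ≤ i) (hin : i + 1 ≤ n) :
    IsUnit (lkbGenMatrix n i) :=
  .of_mul_eq_one _ (lkbGenMatrix_mul_lkbGenMatrixInv n i hi hin)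

noncomputable def lkbGenUnit (n : ℕ) (s : Fin (n - 1)) : GL (Idx n) R2 :=
  (isUnit_lkbGenMatrix (n := n) (i := s + 1) (by omega) (by omega)).unit

lemma coe_lkbGenUnit {n : ℕ} (s : Fin (n - 1)) :
    (lkbGenUnit n s : Matrix (Idx n) (Idx n) R2) = lkbGenMatrix n (s + 1) :=
  IsUnit.unit_spec _

lemma lift_lkbGenUnit_braidRels {n : ℕ} :
    ∀ r ∈ braidRels n, FreeGroup.lift (lkbGenUnit n) r = 1 := by
  rintro r (⟨s, t, hst, rfl⟩ | ⟨s, t, hst, rfl⟩) <;>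
    simp only [map_mul, map_inv, FreeGroup.lift_apply_of, mul_inv_eq_one, Units.ext_iff,
      Units.val_mul, coe_lkbGenUnit]
  · rw [← hst]
    exact lkbGenMatrix_braid n (s + 1) (by omega) (by omega)
  · exact lkbGenMatrix_comm n (s + 1) (t + 1) (by omega) (by omega) (by omega)

noncomputable def lkbRep (n : ℕ) : BraidGroup n →* GL (Idx n) R2 :=
  PresentedGroup.toGroup lift_lkbGenUnit_braidRels

lemma isLKBRep_lkbRep (n : ℕ) : IsLKBRep n (lkbRep n) := by
  intro i hi hin
  rw [braidGen, dif_pos (by omega), lkbRep, PresentedGroup.toGroup.of, coe_lkbGenUnit,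
    Nat.sub_add_cancel hi]

theorem lkb_matrices_give_representation_general (n : ℕ) :
    (∀ i, 1 ≤ i → i ≤ n - 1 → IsUnit (lkbGenMatrix n i)) ∧
    (∀ i, 1 ≤ i → i + 1 ≤ n - 1 →
      lkbGenMatrix n i * lkbGenMatrix n (i + 1) * lkbGenMatrix n i =
        lkbGenMatrix n (i + 1) * lkbGenMatrix n i * lkbGenMatrix n (i + 1)) ∧
    (∀ i j, 1 ≤ i → 1 ≤ j → i ≤ n - 1 → j ≤ n - 1 → (i + 1 < j ∨ j + 1 < i) →
      lkbGenMatrix n i * lkbGenMatrix n j = lkbGenMatrix n j * lkbGenMatrix n i) ∧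
    (∃ L : BraidGroup n →* Matrix.GeneralLinearGroup (Idx n) R2, IsLKBRep n L) := by
  refine ⟨fun i hi hin => isUnit_lkbGenMatrix hi (by omega),
    fun i hi hin => lkbGenMatrix_braid n i hi (by omega), ?_, lkbRep n, isLKBRep_lkbRep n⟩
  rintro i j hi hj hin hjn (hij | hji)
  · exact lkbGenMatrix_comm n i j hi hij (by omega)
  · exact (lkbGenMatrix_comm n j i hj hji (by omega)).symm

/-- The explicit matrices `lkbGenMatrix n i` are invertible over
`ℤ[q^{±1}, t^{±1}]` and satisfy the braid relations, and consequently they define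
a group homomorphism `L : B_n → GL(n(n-1)/2, ℤ[q^{±1}, t^{±1}])` (the
Lawrence–Krammer–Bigelow representation). -/
theorem lkb_matrices_give_representation (n : ℕ) (hn : 2 ≤ n) :
    (∀ i, 1 ≤ i → i ≤ n - 1 → IsUnit (lkbGenMatrix n i)) ∧
    (∀ i, 1 ≤ i → i + 1 ≤ n - 1 →
      lkbGenMatrix n i * lkbGenMatrix n (i + 1) * lkbGenMatrix n i =
        lkbGenMatrix n (i + 1) * lkbGenMatrix n i * lkbGenMatrix n (i + 1)) ∧
    (∀ i j, 1 ≤ i → 1 ≤ j → i ≤ n - 1 → j ≤ n - 1 → (i + 1 < j ∨ j + 1 < i) →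
      lkbGenMatrix n i * lkbGenMatrix n j = lkbGenMatrix n j * lkbGenMatrix n i) ∧
    (∃ L : BraidGroup n →* Matrix.GeneralLinearGroup (Idx n) R2, IsLKBRep n L) :=
  lkb_matrices_give_representation_general n
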